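/- arXiv:2604.16477 — 2 statements merged into one kernel-verified Lean document; each statement's English description precedes it below -/
import Mathlib

section
/- Let e0 and e1 be arbitrary programs, ar an arity, D a polynomial, and b : Bool. If checkSolution ar D n = true for some n, then the witness program S_D ar D b is observationally equivalent to e1 when b = true, and to e0 when b = false. -/
namespace Rice

/-- A program maps an input and a fuel bound to an optional output. -/
def Program := ℕ → ℕ → Option ℕ

/-- Observational equivalence: eventual agreement at every input. -/
def ObsEquiv (e f : Program) : Prop :=
  ∀ x, ∃ N, ∀ k, k ≥ N → e x k = f x k

/-- Stable termination on input 0. -/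
def TerminatesPred (e : Program) : Prop :=
  ∃ fuel v, e 0 fuel = some v ∧ ∀ fuel', fuel' ≥ fuel → e 0 fuel' = some v

/-- A program is stable (monotone in fuel). -/
def Stable (e : Program) : Prop :=
  ∀ x k v, e x k = some v → ∀ k', k' ≥ k → e x k' = some v

/-- The always-diverging program. -/
def diverge : Program := fun _ _ => none

/-- The always-halting program. -/
def halt : Program := fun _ _ => some 0

/-- Integer-coefficient polynomials as lists of monomials. -/
abbrev Poly := List (ℤ × List ℕ)

def evalMonomial (m : ℤ × List ℕ) (vars : List ℕ) : ℤ :=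
  m.1 * (List.foldl (fun acc p => acc * (p.1 : ℤ) ^ p.2) 1 (vars.zip m.2))

def evalPoly (P : Poly) (vars : List ℕ) : ℤ :=
  List.foldl (fun acc m => acc + evalMonomial m vars) 0 P

def cantorPair (a b : ℕ) : ℕ := (a + b) * (a + b + 1) / 2 + b
def cantorW (n : ℕ) : ℕ := (Nat.sqrt (8 * n + 1) - 1) / 2
def cantorUnpairSnd (n : ℕ) : ℕ := n - (cantorW n) * (cantorW n + 1) / 2
def cantorUnpairFst (n : ℕ) : ℕ := cantorW n - cantorUnpairSnd n

def decodeK : ℕ → ℕ → List ℕ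
  | 0, _ => []
  | 1, n => [n]
  | k + 2, n => decodeK (k + 1) (cantorUnpairFst n) ++ [cantorUnpairSnd n]

def checkSolution (ar : ℕ) (P : Poly) (n : ℕ) : Bool :=
  decide (evalPoly P (decodeK ar n) = 0)

def isSolvable (ar : ℕ) (P : Poly) : Prop := ∃ n, checkSolution ar P n = true
def isUnsolvable (ar : ℕ) (P : Poly) : Prop := ∀ n, checkSolution ar P n = false

def findSol (ar : ℕ) (P : Poly) : ℕ → Option ℕ
  | 0 => if checkSolution ar P 0 then some 0 else none
  | k + 1 =>
    match findSol ar P k with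
    | some n => some n
    | none => if checkSolution ar P (k + 1) then some (k + 1) else none

/-- The two-witness construction. -/
def S_D (e0 e1 : Program) (ar : ℕ) (D : Poly) (b : Bool) : Program :=
  fun x fuel =>
    match findSol ar D fuel with
    | some _ => (if b then e1 else e0) x fuel
    | none => none

/-- h10c constraints. -/
inductive h10c where
  | one : ℕ → h10c
  | plus : ℕ → ℕ → ℕ → h10c
  | mult : ℕ → ℕ → ℕ → h10c

def h10cSem (c : h10c) (φ : ℕ → ℕ) : Prop :=
  match c with
  | .one x => φ x = 1
  | .plus x y z => φ x + φ y = φ z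
  | .mult x y z => φ x * φ y = φ z

def H10C_SAT (cs : List h10c) : Prop := ∃ φ : ℕ → ℕ, ∀ c ∈ cs, h10cSem c φ

/-- Nat-coefficient polynomials. -/
abbrev NatPoly := List (ℕ × List ℕ)

def evalNatMonomial (m : ℕ × List ℕ) (vars : List ℕ) : ℕ :=
  m.1 * (List.foldl (fun acc p => acc * p.1 ^ p.2) 1 (vars.zip m.2))

def evalNatPoly (P : NatPoly) (vars : List ℕ) : ℕ :=
  List.foldl (fun acc m => acc + evalNatMonomial m vars) 0 P

def posMonomials (P : Poly) : NatPoly :=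
  P.filterMap (fun m => if 0 < m.1 then some (m.1.toNat, m.2) else none)

def negMonomials (P : Poly) : NatPoly :=
  P.filterMap (fun m => if m.1 < 0 then some ((-m.1).toNat, m.2) else none)

/-- An h10c instance: arity, positive part, negative part. -/
abbrev H10cInst := ℕ × NatPoly × NatPoly

def H10cSat (inst : H10cInst) : Prop :=
  ∃ n, evalNatPoly inst.2.1 (decodeK inst.1 n) = evalNatPoly inst.2.2 (decodeK inst.1 n)

def h10cToPoly (inst : H10cInst) : Poly :=
  inst.2.1.map (fun m => ((m.1 : ℤ), m.2)) ++ inst.2.2.map (fun m => (-(m.1 : ℤ), m.2))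

/-- Pointwise addition of exponent lists. -/
def map2Add : List ℕ → List ℕ → List ℕ
  | x :: xs, y :: ys => (x + y) :: map2Add xs ys
  | _, _ => []

def monoMult (m1 m2 : ℕ × List ℕ) : ℕ × List ℕ := (m1.1 * m2.1, map2Add m1.2 m2.2)

def polyMult (p1 p2 : NatPoly) : NatPoly := p1.flatMap (fun m1 => p2.map (monoMult m1))

def polyScale (c : ℕ) (p : NatPoly) : NatPoly := p.map (fun m => (c * m.1, m.2))

def polySq (p : NatPoly) : NatPoly := polyMult p p

/-- Sum-of-squares conjunction encoding. -/
def conjEncode : List (NatPoly × NatPoly) → NatPoly × NatPoly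
  | [] => ([], [])
  | (p, n) :: rest =>
    let r := conjEncode rest
    (polySq p ++ polySq n ++ r.1, polyScale 2 (polyMult p n) ++ r.2)

/-- All exponent lists have length k. -/
def allLen (k : ℕ) (p : NatPoly) : Prop := ∀ m ∈ p, m.2.length = k

theorem findSol_succ_isSome {ar : ℕ} {P : Poly} {k : ℕ} (hk : (findSol ar P k).isSome) :
    (findSol ar P (k + 1)).isSome := by
  obtain ⟨m, hm⟩ := Option.isSome_iff_exists.mp hk
  simp [findSol, hm]

theorem findSol_isSome_of_checkSolution {ar : ℕ} {P : Poly} {n : ℕ}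
    (h : checkSolution ar P n = true) : (findSol ar P n).isSome := by
  cases n with
  | zero => simp [findSol, h]
  | succ k => rcases hs : findSol ar P k <;> simp [findSol, hs, h]

theorem findSol_isSome_of_le {ar : ℕ} {P : Poly} {n k : ℕ} (h : checkSolution ar P n = true)
    (hnk : n ≤ k) : (findSol ar P k).isSome :=
  Nat.le_induction (findSol_isSome_of_checkSolution h) (fun _ _ => findSol_succ_isSome) k hnk

theorem S_D_apply_of_isSome (e0 e1 : Program) (ar : ℕ) (D : Poly) (b : Bool) (x fuel : ℕ)
    (h : (findSol ar D fuel).isSome) :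
    S_D e0 e1 ar D b x fuel = (if b then e1 else e0) x fuel := by
  obtain ⟨m, hm⟩ := Option.isSome_iff_exists.mp h
  simp [S_D, hm]

/-- When D is solvable, the witness program behaves like the chosen witness. -/
theorem S_D_solvable_equiv (e0 e1 : Program) (ar : ℕ) (D : Poly) (b : Bool) (n : ℕ)
    (h : checkSolution ar D n = true) :
    ObsEquiv (S_D e0 e1 ar D b) (if b then e1 else e0) :=
  fun x => ⟨n, fun _ hk => S_D_apply_of_isSome e0 e1 ar D b x _ (findSol_isSome_of_le h hk)⟩

end Rice
end

section
/- Assume there is no function f : List h10c → Bool such that f cs = true whenever H10C_SAT cs and f cs = false whenever ¬H10C_SAT cs. Then there is no function F : ℕ → Poly → ℤ such that F ar D = 1 whenever isSolvable ar D and F ar D = 0 whenever isUnsolvable ar D. (MRDP undecidability for the polynomial model, derived from H10C undecidability.) -/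
namespace Rice

/-! A system of h10c constraints over the variables `0, …, k-1` is satisfiable iff the single
polynomial equation `∑ (lhs - rhs)² = 0` is, the sum running over its constraints. Since `decodeK k`
maps onto the lists of length `k`, solvability of that equation is exactly `isSolvable`, so a
decider for `isSolvable` composed with this encoding decides h10c. -/

lemma foldl_add_eq_sum_map {α M : Type*} [AddCommMonoid M] (f : α → M) (l : List α) :
    l.foldl (fun acc a => acc + f a) 0 = (l.map f).sum := by
  rw [List.sum_eq_foldl, List.foldl_map]

lemma foldl_mul_eq_prod_map {α M : Type*} [CommMonoid M] (f : α → M) (l : List α) :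
    l.foldl (fun acc a => acc * f a) 1 = (l.map f).prod := by
  rw [List.prod_eq_foldl, List.foldl_map]

lemma sum_map_sq_eq_zero_iff {ι R : Type*} [CommRing R] [LinearOrder R] [IsStrictOrderedRing R]
    (l : List ι) (f : ι → R) : (l.map fun i => f i ^ 2).sum = 0 ↔ ∀ i ∈ l, f i = 0 := by
  induction l with
  | nil => simp
  | cons i l ih =>
    have hrest : 0 ≤ (l.map fun i => f i ^ 2).sum :=
      List.sum_nonneg (by simp only [List.mem_map]; rintro _ ⟨j, -, rfl⟩; positivity)
    simp [add_eq_zero_iff_of_nonneg (sq_nonneg _) hrest, ih]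

def powProd (vars es : List ℕ) : ℕ := ((vars.zip es).map fun p => p.1 ^ p.2).prod

@[simp] lemma powProd_nil_left (es : List ℕ) : powProd [] es = 1 := rfl

@[simp] lemma powProd_nil_right (vars : List ℕ) : powProd vars [] = 1 := by
  simp [powProd]

@[simp] lemma powProd_cons (v e : ℕ) (vars es : List ℕ) :
    powProd (v :: vars) (e :: es) = v ^ e * powProd vars es := rfl

lemma powProd_replicate_zero (vars : List ℕ) (k : ℕ) : powProd vars (List.replicate k 0) = 1 := by
  induction vars generalizing k with
  | nil => rfl
  | cons v vars ih => cases k <;> simp [List.replicate_succ, ih]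

lemma powProd_append_replicate_zero (vars es : List ℕ) (k : ℕ) :
    powProd vars (es ++ List.replicate k 0) = powProd vars es := by
  induction vars generalizing es with
  | nil => rfl
  | cons v vars ih => cases es <;> simp [powProd_replicate_zero, ih]

lemma powProd_map2Add (vars : List ℕ) {e₁ e₂ : List ℕ} (h : e₁.length = e₂.length) :
    powProd vars (map2Add e₁ e₂) = powProd vars e₁ * powProd vars e₂ := by
  induction e₁ generalizing e₂ vars with
  | nil =>
    obtain rfl : e₂ = [] := List.eq_nil_of_length_eq_zero h.symm
    simp [map2Add]
  | cons a e₁ ih =>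
    obtain _ | ⟨b, e₂⟩ := e₂
    · simp at h
    obtain _ | ⟨v, vars⟩ := vars
    · simp
    simp only [map2Add, powProd_cons, ih vars (by simpa using h), pow_add]
    ring

lemma length_map2Add {e₁ e₂ : List ℕ} (h : e₁.length = e₂.length) :
    (map2Add e₁ e₂).length = e₁.length := by
  induction e₁ generalizing e₂ with
  | nil => simp [map2Add]
  | cons a e₁ ih =>
    obtain _ | ⟨b, e₂⟩ := e₂
    · simp at h
    simp [map2Add, ih (by simpa using h)]

def unitExps (k x : ℕ) : List ℕ := List.replicate x 0 ++ [1] ++ List.replicate (k - (x + 1)) 0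

lemma length_unitExps {k x : ℕ} (h : x < k) : (unitExps k x).length = k := by
  simp [unitExps]
  omega

lemma powProd_unitExps (vars : List ℕ) (k x : ℕ) : powProd vars (unitExps k x) = vars.getD x 1 := by
  rw [unitExps, powProd_append_replicate_zero]
  induction vars generalizing x with
  | nil => rfl
  | cons v vars ih => cases x <;> simp [List.replicate_succ, ih]

lemma evalNatMonomial_eq (m : ℕ × List ℕ) (vars : List ℕ) :
    evalNatMonomial m vars = m.1 * powProd vars m.2 := by
  rw [evalNatMonomial, foldl_mul_eq_prod_map, powProd]

lemma evalNatPoly_eq_sum (P : NatPoly) (vars : List ℕ) :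
    evalNatPoly P vars = (P.map (evalNatMonomial · vars)).sum :=
  foldl_add_eq_sum_map _ P

lemma evalPoly_eq_sum (P : Poly) (vars : List ℕ) :
    evalPoly P vars = (P.map (evalMonomial · vars)).sum :=
  foldl_add_eq_sum_map _ P

lemma evalMonomial_natCast (m : ℕ × List ℕ) (vars : List ℕ) :
    evalMonomial ((m.1 : ℤ), m.2) vars = evalNatMonomial m vars := by
  rw [evalMonomial, foldl_mul_eq_prod_map, evalNatMonomial_eq, powProd]
  push_cast [Nat.cast_list_prod, List.map_map]
  rfl

lemma evalPoly_h10cToPoly (inst : H10cInst) (vars : List ℕ) :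
    evalPoly (h10cToPoly inst) vars = evalNatPoly inst.2.1 vars - evalNatPoly inst.2.2 vars := by
  have hneg (m : ℕ × List ℕ) : evalMonomial (-(m.1 : ℤ), m.2) vars = -evalNatMonomial m vars := by
    rw [← evalMonomial_natCast, evalMonomial, evalMonomial, neg_mul]
  simp [h10cToPoly, evalPoly_eq_sum, evalNatPoly_eq_sum, Function.comp_def, evalMonomial_natCast,
    hneg, Nat.cast_list_sum, sub_eq_add_neg, List.sum_neg]

lemma evalNatPoly_append (P Q : NatPoly) (vars : List ℕ) :
    evalNatPoly (P ++ Q) vars = evalNatPoly P vars + evalNatPoly Q vars := by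
  simp [evalNatPoly_eq_sum]

lemma evalNatPoly_polyScale (c : ℕ) (P : NatPoly) (vars : List ℕ) :
    evalNatPoly (polyScale c P) vars = c * evalNatPoly P vars := by
  simp [evalNatPoly_eq_sum, polyScale, evalNatMonomial_eq, Function.comp_def, mul_assoc,
    List.sum_map_mul_left]

lemma evalNatMonomial_monoMult (vars : List ℕ) {m₁ m₂ : ℕ × List ℕ}
    (h : m₁.2.length = m₂.2.length) :
    evalNatMonomial (monoMult m₁ m₂) vars = evalNatMonomial m₁ vars * evalNatMonomial m₂ vars := by
  simp only [evalNatMonomial_eq, monoMult, powProd_map2Add vars h]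
  ring

lemma evalNatPoly_polyMult {k : ℕ} {P Q : NatPoly} (hP : allLen k P) (hQ : allLen k Q)
    (vars : List ℕ) :
    evalNatPoly (polyMult P Q) vars = evalNatPoly P vars * evalNatPoly Q vars := by
  induction P with
  | nil => simp [polyMult, evalNatPoly_eq_sum]
  | cons m P ih =>
    have hm (m' : ℕ × List ℕ) (hm' : m' ∈ Q) : m.2.length = m'.2.length := by
      rw [hP m (by simp), hQ m' hm']
    have hmQ :
        evalNatPoly (Q.map (monoMult m)) vars = evalNatMonomial m vars * evalNatPoly Q vars := by
      simp only [evalNatPoly_eq_sum, List.map_map, ← List.sum_map_mul_left]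
      exact congrArg List.sum (List.map_congr_left fun m' hm' =>
        evalNatMonomial_monoMult vars (hm m' hm'))
    rw [polyMult, List.flatMap_cons, evalNatPoly_append, hmQ, ← polyMult,
      ih fun m' hm' => hP m' (by simp [hm'])]
    simp [evalNatPoly_eq_sum, add_mul]

lemma natCast_evalNatPoly_conjEncode_sub {k : ℕ} (L : List (NatPoly × NatPoly))
    (hL : ∀ pr ∈ L, allLen k pr.1 ∧ allLen k pr.2) (vars : List ℕ) :
    (evalNatPoly (conjEncode L).1 vars : ℤ) - evalNatPoly (conjEncode L).2 vars =
      (L.map fun pr => ((evalNatPoly pr.1 vars : ℤ) - evalNatPoly pr.2 vars) ^ 2).sum := by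
  induction L with
  | nil => simp [conjEncode, evalNatPoly_eq_sum]
  | cons pr L ih =>
    obtain ⟨hp, hn⟩ := hL pr (by simp)
    have hrest := ih fun pr' hpr' => hL pr' (by simp [hpr'])
    simp only [conjEncode, polySq, evalNatPoly_append, evalNatPoly_polyScale,
      evalNatPoly_polyMult hp hp, evalNatPoly_polyMult hn hn, evalNatPoly_polyMult hp hn,
      List.map_cons, List.sum_cons, ← hrest]
    push_cast
    ring

lemma evalPoly_h10cToPoly_conjEncode_eq_zero_iff {k : ℕ} (L : List (NatPoly × NatPoly))
    (hL : ∀ pr ∈ L, allLen k pr.1 ∧ allLen k pr.2) (vars : List ℕ) :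
    evalPoly (h10cToPoly (k, conjEncode L)) vars = 0 ↔
      ∀ pr ∈ L, evalNatPoly pr.1 vars = evalNatPoly pr.2 vars := by
  rw [evalPoly_h10cToPoly, natCast_evalNatPoly_conjEncode_sub L hL, sum_map_sq_eq_zero_iff]
  simp only [sub_eq_zero, Nat.cast_inj]

lemma cantorW_cantorPair (a b : ℕ) : cantorW (cantorPair a b) = a + b := by
  have hpair : 8 * cantorPair a b + 1 = 4 * ((a + b) * (a + b + 1)) + 8 * b + 1 := by
    have := Nat.div_mul_cancel (Nat.even_mul_succ_self (a + b)).two_dvd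
    unfold cantorPair
    omega
  -- `8 (t(t+1)/2 + b) + 1` with `t = a + b` lies in `[(2t+1)², (2t+3)²)` because `b ≤ t`
  have hlo : 2 * (a + b) + 1 ≤ Nat.sqrt (8 * cantorPair a b + 1) :=
    Nat.le_sqrt'.mpr (by nlinarith)
  have hhi : Nat.sqrt (8 * cantorPair a b + 1) < 2 * (a + b) + 3 :=
    Nat.sqrt_lt'.mpr (by nlinarith)
  unfold cantorW
  omega

lemma cantorUnpairSnd_cantorPair (a b : ℕ) : cantorUnpairSnd (cantorPair a b) = b := by
  rw [cantorUnpairSnd, cantorW_cantorPair, cantorPair]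
  omega

lemma cantorUnpairFst_cantorPair (a b : ℕ) : cantorUnpairFst (cantorPair a b) = a := by
  rw [cantorUnpairFst, cantorW_cantorPair, cantorUnpairSnd_cantorPair]
  omega

lemma length_decodeK (k n : ℕ) : (decodeK k n).length = k := by
  induction k using Nat.strong_induction_on generalizing n with
  | _ k ih =>
    match k with
    | 0 => rfl
    | 1 => rfl
    | k + 2 => simp [decodeK, ih (k + 1) (by omega)]

lemma exists_decodeK_eq (l : List ℕ) : ∃ n, decodeK l.length n = l := by
  induction l using List.reverseRecOn with
  | nil => exact ⟨0, rfl⟩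
  | append_singleton l a ih =>
    obtain ⟨m, hm⟩ := ih
    match l, hm with
    | [], _ => exact ⟨a, rfl⟩
    | b :: l, hm =>
      refine ⟨cantorPair m a, ?_⟩
      simp only [List.length_append, List.length_cons, List.length_nil] at hm ⊢
      simp [decodeK, cantorUnpairFst_cantorPair, cantorUnpairSnd_cantorPair, hm]

lemma map_getD_range_length {α : Type*} (l : List α) (d : α) :
    (List.range l.length).map (l.getD · d) = l := by
  apply List.ext_getElem <;> simp +contextual

namespace h10c

def varBound : h10c → ℕ
  | .one x => x + 1
  | .plus x y z => max x (max y z) + 1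
  | .mult x y z => max x (max y z) + 1

def sides (k : ℕ) : h10c → NatPoly × NatPoly
  | .one x => ([(1, unitExps k x)], [(1, List.replicate k 0)])
  | .plus x y z => ([(1, unitExps k x), (1, unitExps k y)], [(1, unitExps k z)])
  | .mult x y z => ([(1, map2Add (unitExps k x) (unitExps k y))], [(1, unitExps k z)])

lemma allLen_sides {k : ℕ} {c : h10c} (hc : c.varBound ≤ k) :
    allLen k (c.sides k).1 ∧ allLen k (c.sides k).2 := by
  cases c with
  | one x =>
    have hx : x < k := by simp only [varBound] at hc; omega
    simp [allLen, sides, length_unitExps hx]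
  | plus x y z =>
    obtain ⟨hx, hy, hz⟩ : x < k ∧ y < k ∧ z < k := by simp only [varBound] at hc; omega
    simp [allLen, sides, length_unitExps hx, length_unitExps hy, length_unitExps hz]
  | mult x y z =>
    obtain ⟨hx, hy, hz⟩ : x < k ∧ y < k ∧ z < k := by simp only [varBound] at hc; omega
    simp [allLen, sides, length_map2Add, length_unitExps hx, length_unitExps hy,
      length_unitExps hz]

lemma evalNatPoly_sides_eq_iff {k : ℕ} {c : h10c} (hc : c.varBound ≤ k) (φ : ℕ → ℕ) :
    evalNatPoly (c.sides k).1 ((List.range k).map φ) =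
        evalNatPoly (c.sides k).2 ((List.range k).map φ) ↔ h10cSem c φ := by
  have hvar {x : ℕ} (hx : x < k) : powProd ((List.range k).map φ) (unitExps k x) = φ x := by
    rw [powProd_unitExps, List.getD_eq_getElem _ _ (by simpa using hx)]
    simp
  cases c with
  | one x =>
    have hx : x < k := by simp only [varBound] at hc; omega
    simp [sides, h10cSem, evalNatPoly_eq_sum, evalNatMonomial_eq, hvar hx, powProd_replicate_zero]
  | plus x y z =>
    obtain ⟨hx, hy, hz⟩ : x < k ∧ y < k ∧ z < k := by simp only [varBound] at hc; omega
    simp [sides, h10cSem, evalNatPoly_eq_sum, evalNatMonomial_eq, hvar hx, hvar hy, hvar hz]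
  | mult x y z =>
    obtain ⟨hx, hy, hz⟩ : x < k ∧ y < k ∧ z < k := by simp only [varBound] at hc; omega
    simp [sides, h10cSem, evalNatPoly_eq_sum, evalNatMonomial_eq, hvar hx, hvar hy, hvar hz,
      powProd_map2Add _ ((length_unitExps hx).trans (length_unitExps hy).symm)]

end h10c

-- Any bound on the variable indices serves as the arity; the sum is the simplest one.
def h10cArity (cs : List h10c) : ℕ := (cs.map h10c.varBound).sum

def h10cPoly (cs : List h10c) : Poly :=
  h10cToPoly (h10cArity cs, conjEncode (cs.map (h10c.sides (h10cArity cs))))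

lemma evalPoly_h10cPoly_eq_zero_iff (cs : List h10c) (φ : ℕ → ℕ) :
    evalPoly (h10cPoly cs) ((List.range (h10cArity cs)).map φ) = 0 ↔ ∀ c ∈ cs, h10cSem c φ := by
  have hbound {c : h10c} (hc : c ∈ cs) : c.varBound ≤ h10cArity cs :=
    List.le_sum_of_mem (List.mem_map_of_mem hc)
  rw [h10cPoly, evalPoly_h10cToPoly_conjEncode_eq_zero_iff]
  · simp only [List.forall_mem_map]
    exact forall₂_congr fun c hc => h10c.evalNatPoly_sides_eq_iff (hbound hc) φ
  · simp only [List.forall_mem_map]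
    exact fun c hc => h10c.allLen_sides (hbound hc)

theorem H10C_SAT_iff_isSolvable (cs : List h10c) :
    H10C_SAT cs ↔ isSolvable (h10cArity cs) (h10cPoly cs) := by
  simp only [isSolvable, checkSolution, decide_eq_true_eq]
  constructor
  · rintro ⟨φ, hφ⟩
    obtain ⟨n, hn⟩ := exists_decodeK_eq ((List.range (h10cArity cs)).map φ)
    rw [List.length_map, List.length_range] at hn
    exact ⟨n, by rwa [hn, evalPoly_h10cPoly_eq_zero_iff]⟩
  · rintro ⟨n, hn⟩
    set vars := decodeK (h10cArity cs) n
    have hvars : (List.range (h10cArity cs)).map (vars.getD · 0) = vars := by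
      conv_lhs => rw [← length_decodeK (h10cArity cs) n]
      exact map_getD_range_length vars 0
    rw [← hvars, evalPoly_h10cPoly_eq_zero_iff] at hn
    exact ⟨_, hn⟩

lemma isUnsolvable_iff_not_isSolvable (ar : ℕ) (P : Poly) :
    isUnsolvable ar P ↔ ¬ isSolvable ar P := by
  simp [isUnsolvable, isSolvable]

/-- MRDP undecidability for the polynomial model, derived from H10C undecidability. -/
theorem MRDP_from_H10C
    (hH10C : ¬ ∃ f : List h10c → Bool,
      (∀ cs, H10C_SAT cs → f cs = true) ∧
      (∀ cs, ¬ H10C_SAT cs → f cs = false)) :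
    ¬ ∃ F : ℕ → Poly → ℤ,
      (∀ ar D, isSolvable ar D → F ar D = 1) ∧
      (∀ ar D, isUnsolvable ar D → F ar D = 0) := by
  rintro ⟨F, hF₁, hF₀⟩
  refine hH10C ⟨fun cs => decide (F (h10cArity cs) (h10cPoly cs) = 1), fun cs hsat => ?_,
    fun cs hunsat => ?_⟩
  · simpa using hF₁ _ _ ((H10C_SAT_iff_isSolvable cs).mp hsat)
  · have hzero := hF₀ _ _ ((isUnsolvable_iff_not_isSolvable _ _).mpr
      (mt (H10C_SAT_iff_isSolvable cs).mpr hunsat))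
    simp [hzero]

end Rice
end
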